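/- arXiv:2106.11085 — 6 statements merged into one kernel-verified Lean document; each statement's English description precedes it below -/
import Mathlib

section
/- Let H be a real Hilbert space and T : H → Set H a maximal monotone operator. Then F_T(x,z) ≥ ⟨z,x⟩ for all (x,z) ∈ H × H, where F_T(x,z) := sup_{(y,w) ∈ gra T} (⟨z,y⟩ + ⟨w,x⟩ − ⟨w,y⟩). -/
open RealInnerProductSpace

noncomputable def fitz {H : Type*} [NormedAddCommGroup H] [InnerProductSpace ℝ H]
    (T : H → Set H) (x z : H) : EReal :=
  ⨆ p ∈ {q : H × H | q.2 ∈ T q.1},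
    (((⟪z, p.1⟫ + ⟪p.2, x⟫ - ⟪p.2, p.1⟫ : ℝ) : EReal))

theorem fitz_ge_coupling_of_maximal
    {H : Type*} [NormedAddCommGroup H] [InnerProductSpace ℝ H] [CompleteSpace H]
    (T : H → Set H)
    (hmono : ∀ x z y w : H, z ∈ T x → w ∈ T y → 0 ≤ ⟪z - w, x - y⟫)
    (hmax : ∀ x z : H, (∀ y w : H, w ∈ T y → 0 ≤ ⟪z - w, x - y⟫) → z ∈ T x) :
    ∀ x z : H, ((⟪z, x⟫ : ℝ) : EReal) ≤ fitz T x z := by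
  intro x z
  by_cases hz : z ∈ T x
  · have : ((⟪z, x⟫ : ℝ) : EReal) ≤
        (((⟪z, (x, z).1⟫ + ⟪(x, z).2, x⟫ - ⟪(x, z).2, (x, z).1⟫ : ℝ) : EReal)) := by
      simp
    exact this.trans (le_iSup₂ (f := fun p (_ : p ∈ {q : H × H | q.2 ∈ T q.1}) =>
      (((⟪z, p.1⟫ + ⟪p.2, x⟫ - ⟪p.2, p.1⟫ : ℝ) : EReal))) (x, z) hz)
  · have h : ¬ ∀ y w : H, w ∈ T y → 0 ≤ ⟪z - w, x - y⟫ := fun h => hz (hmax x z h)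
    push_neg at h
    obtain ⟨y, w, hw, hlt⟩ := h
    have hr : (⟪z, x⟫ : ℝ) < ⟪z, y⟫ + ⟪w, x⟫ - ⟪w, y⟫ := by
      have := hlt
      rw [inner_sub_left, inner_sub_right, inner_sub_right] at this
      linarith
    have : ((⟪z, x⟫ : ℝ) : EReal) ≤
        (((⟪z, (y, w).1⟫ + ⟪(y, w).2, x⟫ - ⟪(y, w).2, (y, w).1⟫ : ℝ) : EReal)) := by
      exact_mod_cast hr.le
    exact this.trans (le_iSup₂ (f := fun p (_ : p ∈ {q : H × H | q.2 ∈ T q.1}) =>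
      (((⟪z, p.1⟫ + ⟪p.2, x⟫ - ⟪p.2, p.1⟫ : ℝ) : EReal))) (y, w) hw)
end

section
/- Let H be a real Hilbert space and T : H → Set H a maximal monotone operator. Then gra T = {(x,z) : F_T(x,z) = ⟨z,x⟩} = {(x,z) : F_T(x,z) ≤ ⟨z,x⟩}, where F_T(x,z) := sup_{(y,w) ∈ gra T} (⟨z,y⟩ + ⟨w,x⟩ − ⟨w,y⟩). -/
open RealInnerProductSpace

lemma inner_expand {H : Type*} [NormedAddCommGroup H] [InnerProductSpace ℝ H]
    (x z y w : H) : ⟪z - w, x - y⟫ = ⟪z, x⟫ - (⟪z, y⟫ + ⟪w, x⟫ - ⟪w, y⟫) := by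
  simp [inner_sub_left, inner_sub_right]; ring

theorem graph_eq_fitz_eq_coupling
    {H : Type*} [NormedAddCommGroup H] [InnerProductSpace ℝ H] [CompleteSpace H]
    (T : H → Set H)
    (hmono : ∀ x z y w : H, z ∈ T x → w ∈ T y → 0 ≤ ⟪z - w, x - y⟫)
    (hmax : ∀ x z : H, (∀ y w : H, w ∈ T y → 0 ≤ ⟪z - w, x - y⟫) → z ∈ T x) :
    {q : H × H | q.2 ∈ T q.1} = {q : H × H | fitz T q.1 q.2 = ((⟪q.2, q.1⟫ : ℝ) : EReal)} ∧
    {q : H × H | q.2 ∈ T q.1} = {q : H × H | fitz T q.1 q.2 ≤ ((⟪q.2, q.1⟫ : ℝ) : EReal)} := by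
  have key : ∀ x z : H, z ∈ T x → fitz T x z ≤ ((⟪z, x⟫ : ℝ) : EReal) := by
    intro x z hz
    apply iSup₂_le
    intro p hp
    have h0 := hmono x z p.1 p.2 hz hp
    rw [inner_expand] at h0
    exact_mod_cast by linarith
  have rev : ∀ q : H × H, fitz T q.1 q.2 ≤ ((⟪q.2, q.1⟫ : ℝ) : EReal) → q.2 ∈ T q.1 := by
    intro q hle
    apply hmax
    intro y w hw
    have h1 : (((⟪q.2, y⟫ + ⟪w, q.1⟫ - ⟪w, y⟫ : ℝ)) : EReal) ≤ fitz T q.1 q.2 :=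
      le_iSup₂ (f := fun (p : H × H) (_ : p ∈ {q : H × H | q.2 ∈ T q.1}) =>
        (((⟪q.2, p.1⟫ + ⟪p.2, q.1⟫ - ⟪p.2, p.1⟫ : ℝ) : EReal))) (y, w) hw
    have h2 : (⟪q.2, y⟫ + ⟪w, q.1⟫ - ⟪w, y⟫ : ℝ) ≤ ⟪q.2, q.1⟫ := by
      exact_mod_cast h1.trans hle
    rw [inner_expand]
    linarith
  have ge : ∀ q : H × H, q.2 ∈ T q.1 → ((⟪q.2, q.1⟫ : ℝ) : EReal) ≤ fitz T q.1 q.2 := by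
    intro q hq
    have h1 : (((⟪q.2, q.1⟫ + ⟪q.2, q.1⟫ - ⟪q.2, q.1⟫ : ℝ)) : EReal) ≤ fitz T q.1 q.2 :=
      le_iSup₂ (f := fun (p : H × H) (_ : p ∈ {q : H × H | q.2 ∈ T q.1}) =>
        (((⟪q.2, p.1⟫ + ⟪p.2, q.1⟫ - ⟪p.2, p.1⟫ : ℝ) : EReal))) q hq
    simpa using h1
  constructor
  · ext q
    constructor
    · intro hq
      exact le_antisymm (key q.1 q.2 hq) (ge q hq)
    · intro hq
      exact rev q (le_of_eq hq)
  · ext q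
    exact ⟨fun hq => key q.1 q.2 hq, fun hq => rev q hq⟩
end

section
/- Let H be a real Hilbert space. If T, S : H → Set H are maximal monotone operators with equal Fitzpatrick functions F_T = F_S, then gra T = gra S. -/
open RealInnerProductSpace

lemma fitz_mem_iff {H : Type*} [NormedAddCommGroup H] [InnerProductSpace ℝ H]
    (T : H → Set H)
    (hmono : ∀ x z y w : H, z ∈ T x → w ∈ T y → 0 ≤ ⟪z - w, x - y⟫)
    (hmax : ∀ x z : H, (∀ y w : H, w ∈ T y → 0 ≤ ⟪z - w, x - y⟫) → z ∈ T x)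
    (x z : H) : z ∈ T x ↔ fitz T x z ≤ ((⟪z, x⟫ : ℝ) : EReal) := by
  constructor
  · intro h
    apply iSup₂_le
    rintro ⟨y, w⟩ hw
    rw [EReal.coe_le_coe_iff]
    have h0 := hmono x z y w h hw
    simp only [inner_sub_left, inner_sub_right] at h0
    have h1 : ⟪w, y⟫ = ⟪y, w⟫ := real_inner_comm y w
    have h2 : ⟪w, x⟫ = ⟪x, w⟫ := real_inner_comm x w
    simp only [Set.mem_setOf_eq] at hw ⊢
    linarith
  · intro h
    apply hmax
    intro y w hw
    have hle : (((⟪z, y⟫ + ⟪w, x⟫ - ⟪w, y⟫ : ℝ) : EReal)) ≤ fitz T x z := by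
      exact le_iSup₂ (f := fun (p : H × H) (_ : p ∈ {q : H × H | q.2 ∈ T q.1}) =>
        (((⟪z, p.1⟫ + ⟪p.2, x⟫ - ⟪p.2, p.1⟫ : ℝ) : EReal))) ⟨y, w⟩ hw
    have := le_trans hle h
    rw [EReal.coe_le_coe_iff] at this
    simp only [inner_sub_left, inner_sub_right]
    have h1 : ⟪w, y⟫ = ⟪y, w⟫ := real_inner_comm y w
    have h2 : ⟪w, x⟫ = ⟪x, w⟫ := real_inner_comm x w
    linarith

theorem maximal_monotone_fitz_injective
    {H : Type*} [NormedAddCommGroup H] [InnerProductSpace ℝ H] [CompleteSpace H]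
    (T S : H → Set H)
    (hTmono : ∀ x z y w : H, z ∈ T x → w ∈ T y → 0 ≤ ⟪z - w, x - y⟫)
    (hTmax : ∀ x z : H, (∀ y w : H, w ∈ T y → 0 ≤ ⟪z - w, x - y⟫) → z ∈ T x)
    (hSmono : ∀ x z y w : H, z ∈ S x → w ∈ S y → 0 ≤ ⟪z - w, x - y⟫)
    (hSmax : ∀ x z : H, (∀ y w : H, w ∈ S y → 0 ≤ ⟪z - w, x - y⟫) → z ∈ S x)
    (hF : fitz T = fitz S) :
    {q : H × H | q.2 ∈ T q.1} = {q : H × H | q.2 ∈ S q.1} := by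
  ext ⟨x, z⟩
  simp only [Set.mem_setOf_eq]
  rw [fitz_mem_iff T hTmono hTmax, fitz_mem_iff S hSmono hSmax, hF]
end

section
/- Let H be a real Hilbert space and T : H → Set H a monotone operator with nonempty graph G. Then F_T(x,z) ≤ (F_T)⋆(z,x) ≤ ⟨z,x⟩ + ι_G(x,z) for all (x,z), with equality throughout whenever (x,z) ∈ G. Here (F_T)⋆(z,x) := sup_{(y,w)} (⟨z,y⟩ + ⟨w,x⟩ − F_T(y,w)). -/
open RealInnerProductSpace

noncomputable def fenchelConj {H : Type*} [NormedAddCommGroup H] [InnerProductSpace ℝ H]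
    (h : H × H → EReal) (u x : H) : EReal :=
  ⨆ p : H × H, (((⟪u, p.1⟫ + ⟪p.2, x⟫ : ℝ) : EReal) - h p)

open Classical in
noncomputable def eindicator {α : Type*} (G : Set α) (p : α) : EReal :=
  if p ∈ G then (0 : EReal) else ⊤

lemma fitz_ge_on {H : Type*} [NormedAddCommGroup H] [InnerProductSpace ℝ H]
    (T : H → Set H) {y w : H} (hw : w ∈ T y) (x z : H) :
    (((⟪z, y⟫ + ⟪w, x⟫ - ⟪w, y⟫ : ℝ) : EReal)) ≤ fitz T x z := by
  exact le_iSup₂ (f := fun (p : H × H) (_ : p ∈ {q : H × H | q.2 ∈ T q.1}) =>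
    (((⟪z, p.1⟫ + ⟪p.2, x⟫ - ⟪p.2, p.1⟫ : ℝ) : EReal))) (y, w) hw

lemma fitz_eq_on_graph {H : Type*} [NormedAddCommGroup H] [InnerProductSpace ℝ H]
    (T : H → Set H)
    (hmono : ∀ x z y w : H, z ∈ T x → w ∈ T y → 0 ≤ ⟪z - w, x - y⟫)
    {x z : H} (hz : z ∈ T x) : fitz T x z = ((⟪z, x⟫ : ℝ) : EReal) := by
  apply le_antisymm
  · apply iSup₂_le
    intro p hp
    have h := hmono x z p.1 p.2 hz hp
    rw [inner_sub_left, inner_sub_right, inner_sub_right] at h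
    exact_mod_cast (by linarith : (⟪z, p.1⟫ + ⟪p.2, x⟫ - ⟪p.2, p.1⟫ : ℝ) ≤ ⟪z, x⟫)
  · have := fitz_ge_on T hz x z
    simpa using this

theorem fitz_le_conj_le_coupling
    {H : Type*} [NormedAddCommGroup H] [InnerProductSpace ℝ H] [CompleteSpace H]
    (T : H → Set H) (hne : {q : H × H | q.2 ∈ T q.1}.Nonempty)
    (hmono : ∀ x z y w : H, z ∈ T x → w ∈ T y → 0 ≤ ⟪z - w, x - y⟫) :
    (∀ x z : H,
      fitz T x z ≤ fenchelConj (fun p => fitz T p.1 p.2) z x ∧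
      fenchelConj (fun p => fitz T p.1 p.2) z x ≤
        ((⟪z, x⟫ : ℝ) : EReal) + eindicator {q : H × H | q.2 ∈ T q.1} (x, z)) ∧
    (∀ x z : H, z ∈ T x →
      fitz T x z = fenchelConj (fun p => fitz T p.1 p.2) z x ∧
      fenchelConj (fun p => fitz T p.1 p.2) z x = ((⟪z, x⟫ : ℝ) : EReal)) := by
  have h1 : ∀ x z : H, fitz T x z ≤ fenchelConj (fun p => fitz T p.1 p.2) z x := by
    intro x z
    apply iSup₂_le
    intro p hp
    have hfp : fitz T p.1 p.2 = ((⟪p.2, p.1⟫ : ℝ) : EReal) :=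
      fitz_eq_on_graph T hmono hp
    have : (((⟪z, p.1⟫ + ⟪p.2, x⟫ - ⟪p.2, p.1⟫ : ℝ) : EReal))
        = (((⟪z, p.1⟫ + ⟪p.2, x⟫ : ℝ) : EReal) - fitz T p.1 p.2) := by
      rw [hfp, ← EReal.coe_sub]
    rw [this]
    exact le_iSup (fun q : H × H => (((⟪z, q.1⟫ + ⟪q.2, x⟫ : ℝ) : EReal) - fitz T q.1 q.2)) p
  have h2 : ∀ x z : H, z ∈ T x →
      fenchelConj (fun p => fitz T p.1 p.2) z x ≤ ((⟪z, x⟫ : ℝ) : EReal) := by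
    intro x z hz
    apply iSup_le
    intro p
    have hge : (((⟪p.2, x⟫ + ⟪z, p.1⟫ - ⟪z, x⟫ : ℝ) : EReal)) ≤ fitz T p.1 p.2 :=
      fitz_ge_on T hz p.1 p.2
    calc ((⟪z, p.1⟫ + ⟪p.2, x⟫ : ℝ) : EReal) - fitz T p.1 p.2
        ≤ ((⟪z, p.1⟫ + ⟪p.2, x⟫ : ℝ) : EReal)
            - (((⟪p.2, x⟫ + ⟪z, p.1⟫ - ⟪z, x⟫ : ℝ) : EReal)) := by
          exact EReal.sub_le_sub (le_refl _) hge
      _ = ((⟪z, x⟫ : ℝ) : EReal) := by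
          rw [← EReal.coe_sub]; norm_cast; ring
  refine ⟨fun x z => ⟨h1 x z, ?_⟩, fun x z hz => ?_⟩
  · by_cases hxz : (x, z) ∈ {q : H × H | q.2 ∈ T q.1}
    · rw [eindicator, if_pos hxz, add_zero]
      exact h2 x z hxz
    · rw [eindicator, if_neg hxz]
      simp [EReal.add_top_iff_ne_bot]
  · have heq : fitz T x z = ((⟪z, x⟫ : ℝ) : EReal) := fitz_eq_on_graph T hmono hz
    have hle := h1 x z
    have hle2 := h2 x z hz
    constructor
    · exact le_antisymm hle (by rw [heq] at hle ⊢; exact hle2)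
    · exact le_antisymm hle2 (heq ▸ hle)
end

section
/- Let H be a real Hilbert space and h : H × H → ℝ ∪ {+∞} a proper convex lower semicontinuous function satisfying h(x,z) = sup_{(y,w): h(y,w) ≤ ⟨w,y⟩} (⟨z,y⟩ + ⟨w,x⟩ − h(y,w)) for all (x,z). Then the set-valued operator S_h defined by S_h(x) := {z : h(x,z) = ⟨z,x⟩} satisfies F_{S_h} = h, where F_{S_h}(x,z) := sup_{(y,w) ∈ gra S_h} (⟨z,y⟩ + ⟨w,x⟩ − ⟨w,y⟩). -/
open RealInnerProductSpace

theorem fitz_of_S_h_eq_h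
    {H : Type*} [NormedAddCommGroup H] [InnerProductSpace ℝ H] [CompleteSpace H]
    (h : H × H → EReal)
    (hbot : ∀ p, h p ≠ ⊥) (hproper : ∃ p, h p ≠ ⊤)
    (hconv : ∀ (p q : H × H) (t : ℝ), 0 ≤ t → t ≤ 1 →
      h (t • p.1 + (1 - t) • q.1, t • p.2 + (1 - t) • q.2) ≤
        ((t : ℝ) : EReal) * h p + (((1 - t : ℝ)) : EReal) * h q)
    (hlsc : LowerSemicontinuous h)
    (hrep : ∀ x z : H,
      h (x, z) = ⨆ p ∈ {q : H × H | h q ≤ ((⟪q.2, q.1⟫ : ℝ) : EReal)},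
        (((⟪z, p.1⟫ + ⟪p.2, x⟫ : ℝ) : EReal) - h p)) :
    fitz (fun x => {z : H | h (x, z) = ((⟪z, x⟫ : ℝ) : EReal)}) = fun x z => h (x, z) := by
  have key : ∀ q : H × H, h q ≤ ((⟪q.2, q.1⟫ : ℝ) : EReal) →
      h q = ((⟪q.2, q.1⟫ : ℝ) : EReal) := by
    intro q hle
    have hnt : h q ≠ ⊤ := fun ht => by simp [ht] at hle
    obtain ⟨r, hr⟩ : ∃ r : ℝ, h q = (r : EReal) :=
      ⟨(h q).toReal, (EReal.coe_toReal hnt (hbot q)).symm⟩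
    have hge : (((⟪q.2, q.1⟫ + ⟪q.2, q.1⟫ : ℝ) : EReal) - h q) ≤ h q := by
      have h1 := le_iSup₂ (f := fun (p : H × H)
        (_ : p ∈ {s : H × H | h s ≤ ((⟪s.2, s.1⟫ : ℝ) : EReal)}) =>
        (((⟪q.2, p.1⟫ + ⟪p.2, q.1⟫ : ℝ) : EReal) - h p)) q hle
      rw [← hrep q.1 q.2] at h1
      exact h1
    rw [hr] at hge hle ⊢
    rw [← EReal.coe_sub, EReal.coe_le_coe_iff] at hge
    rw [EReal.coe_le_coe_iff] at hle
    exact congrArg Real.toEReal (le_antisymm hle (by linarith))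
  funext x z
  show (⨆ p ∈ {q : H × H | h (q.1, q.2) = ((⟪q.2, q.1⟫ : ℝ) : EReal)},
    (((⟪z, p.1⟫ + ⟪p.2, x⟫ - ⟪p.2, p.1⟫ : ℝ) : EReal))) = h (x, z)
  have hset : {q : H × H | h (q.1, q.2) = ((⟪q.2, q.1⟫ : ℝ) : EReal)} =
      {q : H × H | h q ≤ ((⟪q.2, q.1⟫ : ℝ) : EReal)} := by
    ext q
    simp only [Set.mem_setOf_eq, Prod.mk.eta]
    exact ⟨le_of_eq, key q⟩
  rw [hset, hrep x z]
  refine biSup_congr ?_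
  intro p hp
  rw [key p hp, ← EReal.coe_sub]
end

section
/- Let H be a real Hilbert space and h : H × H → ℝ ∪ {+∞} a proper convex lower semicontinuous function satisfying h(x,z) = sup_{(y,w): h(y,w) ≤ ⟨w,y⟩} (⟨z,y⟩ + ⟨w,x⟩ − h(y,w)) for all (x,z) (in particular h ≥ π everywhere, where π(x,z) = ⟨z,x⟩). Then the operator S_h(x) := {z : h(x,z) = ⟨z,x⟩} is maximal monotone: its graph is monotone and equals its monotone polar. -/
open RealInnerProductSpace

theorem S_h_maximal_monotone
    {H : Type*} [NormedAddCommGroup H] [InnerProductSpace ℝ H] [CompleteSpace H]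
    (h : H × H → EReal)
    (hbot : ∀ p, h p ≠ ⊥) (hproper : ∃ p, h p ≠ ⊤)
    (hconv : ∀ (p q : H × H) (t : ℝ), 0 ≤ t → t ≤ 1 →
      h (t • p.1 + (1 - t) • q.1, t • p.2 + (1 - t) • q.2) ≤
        ((t : ℝ) : EReal) * h p + (((1 - t : ℝ)) : EReal) * h q)
    (hlsc : LowerSemicontinuous h)
    (hrep : ∀ x z : H,
      h (x, z) = ⨆ p ∈ {q : H × H | h q ≤ ((⟪q.2, q.1⟫ : ℝ) : EReal)},
        (((⟪z, p.1⟫ + ⟪p.2, x⟫ : ℝ) : EReal) - h p)) :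
    (∀ x z y w : H, h (x, z) = ((⟪z, x⟫ : ℝ) : EReal) →
        h (y, w) = ((⟪w, y⟫ : ℝ) : EReal) → 0 ≤ ⟪z - w, x - y⟫) ∧
    {q : H × H | h q = ((⟪q.2, q.1⟫ : ℝ) : EReal)} =
      {q : H × H | ∀ p ∈ {q' : H × H | h q' = ((⟪q'.2, q'.1⟫ : ℝ) : EReal)},
        0 ≤ ⟪q.2 - p.2, q.1 - p.1⟫} := by
  -- Lemma A : h p ≤ π p → h p = π p
  have lemA : ∀ y w : H, h (y, w) ≤ ((⟪w, y⟫ : ℝ) : EReal) →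
      h (y, w) = ((⟪w, y⟫ : ℝ) : EReal) := by
    intro y w hle
    have hne_top : h (y, w) ≠ ⊤ := ne_top_of_le_ne_top (EReal.coe_ne_top _) hle
    set r : ℝ := (h (y, w)).toReal with hrdef
    have hr : ((r : ℝ) : EReal) = h (y, w) := EReal.coe_toReal hne_top (hbot _)
    have hrle : r ≤ ⟪w, y⟫ := by
      rw [← hr] at hle; exact EReal.coe_le_coe_iff.mp hle
    have hmem : (y, w) ∈ {q : H × H | h q ≤ ((⟪q.2, q.1⟫ : ℝ) : EReal)} := hle
    have hterm := le_iSup₂ (f := fun (p : H × H) (_ : p ∈ {q : H × H | h q ≤ ((⟪q.2, q.1⟫ : ℝ) : EReal)}) =>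
        (((⟪w, p.1⟫ + ⟪p.2, y⟫ : ℝ) : EReal) - h p)) (y, w) hmem
    rw [← hrep y w] at hterm
    rw [← hr, ← EReal.coe_sub, EReal.coe_le_coe_iff] at hterm
    rw [← hr, EReal.coe_eq_coe_iff]
    linarith
  have mono : ∀ x z y w : H, h (x, z) = ((⟪z, x⟫ : ℝ) : EReal) →
      h (y, w) = ((⟪w, y⟫ : ℝ) : EReal) → 0 ≤ ⟪z - w, x - y⟫ := by
    intro x z y w hxz hyw
    have hmem : (y, w) ∈ {q : H × H | h q ≤ ((⟪q.2, q.1⟫ : ℝ) : EReal)} := le_of_eq hyw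
    have hterm := le_iSup₂ (f := fun (p : H × H) (_ : p ∈ {q : H × H | h q ≤ ((⟪q.2, q.1⟫ : ℝ) : EReal)}) =>
        (((⟪z, p.1⟫ + ⟪p.2, x⟫ : ℝ) : EReal) - h p)) (y, w) hmem
    rw [← hrep x z] at hterm
    rw [hxz, hyw, ← EReal.coe_sub, EReal.coe_le_coe_iff] at hterm
    have : ⟪z - w, x - y⟫ = ⟪z, x⟫ - ⟪z, y⟫ - ⟪w, x⟫ + ⟪w, y⟫ := by
      simp [inner_sub_left, inner_sub_right]; ring
    linarith [hterm, this.ge, this.le]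
  refine ⟨mono, ?_⟩
  ext q
  constructor
  · intro hq p hp
    exact mono q.1 q.2 p.1 p.2 hq hp
  · intro hq
    apply lemA
    rw [hrep q.1 q.2]
    apply iSup₂_le
    intro p hp
    have hpS : h p = ((⟪p.2, p.1⟫ : ℝ) : EReal) := lemA p.1 p.2 hp
    have hmono : 0 ≤ ⟪q.2 - p.2, q.1 - p.1⟫ := hq p hpS
    rw [hpS, ← EReal.coe_sub, EReal.coe_le_coe_iff]
    have : ⟪q.2 - p.2, q.1 - p.1⟫ = ⟪q.2, q.1⟫ - ⟪q.2, p.1⟫ - ⟪p.2, q.1⟫ + ⟪p.2, p.1⟫ := by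
      simp [inner_sub_left, inner_sub_right]; ring
    linarith
end
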